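/- arXiv:math/0010095 — 2 statements merged into one kernel-verified Lean document; each statement's English description precedes it below -/
import Mathlib

section
/- Define w^m₂₂ = 3T₁/2 - r, w^m₂₄ = T₁/2 + (2T₁ + r)/(2(n+2)), and r_c = ((2n+2)/(2n+5))T₁. For T₁ > 0, integer n ≥ 1, and 0 ≤ r < T₁: if r < r_c then w^m₂₄ < w^m₂₂, and if r > r_c then w^m₂₂ < w^m₂₄. -/
namespace WaitingTime

noncomputable section

/-- `minWaitS2 T₁ r`, `minWaitS4 T₁ r n` and `criticalOffset T₁ n` are the paper's `w^m₂₂`, `w^m₂₄`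
and `r_c`, for the period `T₂ = n T₁ + r`. -/
def minWaitS2 (T₁ r : ℝ) : ℝ := 3 * T₁ / 2 - r

def minWaitS4 (T₁ r n : ℝ) : ℝ := T₁ / 2 + (2 * T₁ + r) / (2 * (n + 2))

def criticalOffset (T₁ n : ℝ) : ℝ := (2 * n + 2) / (2 * n + 5) * T₁

variable {T₁ r n : ℝ}

theorem minWaitS4_sub_minWaitS2 (hn : -2 < n) :
    minWaitS4 T₁ r n - minWaitS2 T₁ r =
      (2 * n + 5) / (2 * (n + 2)) * (r - criticalOffset T₁ n) := by
  have h₁ : n + 2 ≠ 0 := by linarith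
  have h₂ : 2 * n + 5 ≠ 0 := by linarith
  unfold minWaitS4 minWaitS2 criticalOffset
  field_simp
  ring

theorem minWaitS4_sub_minWaitS2_factor_pos (hn : -2 < n) :
    0 < (2 * n + 5) / (2 * (n + 2)) :=
  div_pos (by linarith) (by linarith)

theorem minWaitS4_lt_minWaitS2_iff (hn : -2 < n) :
    minWaitS4 T₁ r n < minWaitS2 T₁ r ↔ r < criticalOffset T₁ n := by
  rw [← sub_neg, minWaitS4_sub_minWaitS2 hn, ← not_le,
    mul_nonneg_iff_of_pos_left (minWaitS4_sub_minWaitS2_factor_pos hn), not_le, sub_neg]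

theorem minWaitS2_lt_minWaitS4_iff (hn : -2 < n) :
    minWaitS2 T₁ r < minWaitS4 T₁ r n ↔ criticalOffset T₁ n < r := by
  rw [← sub_pos, minWaitS4_sub_minWaitS2 hn,
    mul_pos_iff_of_pos_left (minWaitS4_sub_minWaitS2_factor_pos hn), sub_pos]

end

end WaitingTime

open WaitingTime in
theorem w22_w24_compare_general (T₁ r : ℝ) (n : ℕ) :
    (r < ((2 * n + 2) / (2 * n + 5)) * T₁ →
      T₁ / 2 + (2 * T₁ + r) / (2 * (n + 2)) < 3 * T₁ / 2 - r) ∧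
    (((2 * n + 2) / (2 * n + 5)) * T₁ < r →
      3 * T₁ / 2 - r < T₁ / 2 + (2 * T₁ + r) / (2 * (n + 2))) := by
  have hn : (-2 : ℝ) < n := by linarith [n.cast_nonneg (α := ℝ)]
  exact ⟨(minWaitS4_lt_minWaitS2_iff hn).2, (minWaitS2_lt_minWaitS4_iff hn).2⟩

/-- Comparison of w^m₂₂ and w^m₂₄ relative to r_c. -/
theorem w22_w24_compare (T₁ r : ℝ) (n : ℕ) (hT : 0 < T₁) (hn : 1 ≤ n)
    (hr0 : 0 ≤ r) (hr : r < T₁) :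
    (r < ((2 * n + 2) / (2 * n + 5)) * T₁ →
      T₁ / 2 + (2 * T₁ + r) / (2 * (n + 2)) < 3 * T₁ / 2 - r) ∧
    (((2 * n + 2) / (2 * n + 5)) * T₁ < r →
      3 * T₁ / 2 - r < T₁ / 2 + (2 * T₁ + r) / (2 * (n + 2))) :=
  w22_w24_compare_general T₁ r n
end

section
/- Suppose r < r_s where r_s = ((2n+2)/(2n+3))T₁, and let n₁, n₂, n₃ ≥ 0 with n₂ > (r / ((2n+3)(r_s - r))) (3n₁ + n₃). Then n₁·w^m₁₁ + n₂·w^m₂₁ + n₃·w^m₃₁ < n₁·w^m₁₂ + n₂·w^m₂₂ + n₃·w^m₃₂, where w^m₁₁ = T₁/2 + 3r/(2(n+1)), w^m₂₁ = w^m₃₁ = T₁/2 + r/(2(n+1)), w^m₁₂ = w^m₃₂ = T₁/2, and w^m₂₂ = 3T₁/2 - r. -/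
/-!
Multiplying the difference of the two passenger-weighted waiting times by `2(n+1)` leaves
`n₂ ((2n+2)T₁ - (2n+3)r) - r (3n₁ + n₃) = n₂ (2n+3)(r_s - r) - r (3n₁ + n₃)`,
which is positive exactly when `n₂` exceeds the stated threshold, since `r < r_s`.
-/

lemma mul_sub_critical_eq {m : ℝ} (hm : -1 < m) (T r : ℝ) :
    (2 * m + 3) * ((2 * m + 2) / (2 * m + 3) * T - r) = (2 * m + 2) * T - (2 * m + 3) * r := by
  have : 2 * m + 3 ≠ 0 := by linarith
  field_simp

lemma waiting_gap_eq {m : ℝ} (hm : -1 < m) (T r n₁ n₂ n₃ : ℝ) :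
    n₁ * (T / 2) + n₂ * (3 * T / 2 - r) + n₃ * (T / 2) -
        (n₁ * (T / 2 + 3 * r / (2 * (m + 1))) + n₂ * (T / 2 + r / (2 * (m + 1))) +
          n₃ * (T / 2 + r / (2 * (m + 1)))) =
      (n₂ * ((2 * m + 2) * T - (2 * m + 3) * r) - r * (3 * n₁ + n₃)) / (2 * (m + 1)) := by
  have : m + 1 ≠ 0 := by linarith
  field_simp
  ring

lemma mul_lt_mul_of_div_mul_lt {a b D x : ℝ} (hD : 0 < D) (h : x > a / D * b) : a * b < x * D := by
  rwa [gt_iff_lt, div_mul_eq_mul_div, div_lt_iff₀ hD] at h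

theorem S1_beats_S2_general (T₁ r : ℝ) (n : ℕ)
    (hrs : r < ((2 * n + 2) / (2 * n + 3)) * T₁)
    (n₁ n₂ n₃ : ℝ)
    (hcond : n₂ > (r / ((2 * n + 3) * (((2 * n + 2) / (2 * n + 3)) * T₁ - r))) * (3 * n₁ + n₃)) :
    n₁ * (T₁ / 2 + 3 * r / (2 * (n + 1))) + n₂ * (T₁ / 2 + r / (2 * (n + 1))) +
      n₃ * (T₁ / 2 + r / (2 * (n + 1))) <
    n₁ * (T₁ / 2) + n₂ * (3 * T₁ / 2 - r) + n₃ * (T₁ / 2) := by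
  have hn : (-1 : ℝ) < n := by linarith [n.cast_nonneg (α := ℝ)]
  have hD : 0 < (2 * (n : ℝ) + 3) * ((2 * n + 2) / (2 * n + 3) * T₁ - r) :=
    mul_pos (by linarith) (sub_pos.mpr hrs)
  have hgap := mul_lt_mul_of_div_mul_lt hD hcond
  rw [mul_sub_critical_eq hn] at hgap
  rw [← sub_pos, waiting_gap_eq hn]
  exact div_pos (by linarith) (by linarith)

/-- If enough passengers take journey J₂, rule S₁ beats rule S₂ on average waiting time. -/
theorem S1_beats_S2 (T₁ r : ℝ) (n : ℕ) (hT : 0 < T₁) (hn : 1 ≤ n)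
    (hr0 : 0 ≤ r) (hr : r < T₁)
    (hrs : r < ((2 * n + 2) / (2 * n + 3)) * T₁)
    (n₁ n₂ n₃ : ℝ) (h₁ : 0 ≤ n₁) (h₂ : 0 ≤ n₂) (h₃ : 0 ≤ n₃)
    (hcond : n₂ > (r / ((2 * n + 3) * (((2 * n + 2) / (2 * n + 3)) * T₁ - r))) * (3 * n₁ + n₃)) :
    n₁ * (T₁ / 2 + 3 * r / (2 * (n + 1))) + n₂ * (T₁ / 2 + r / (2 * (n + 1))) +
      n₃ * (T₁ / 2 + r / (2 * (n + 1))) <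
    n₁ * (T₁ / 2) + n₂ * (3 * T₁ / 2 - r) + n₃ * (T₁ / 2) :=
  S1_beats_S2_general T₁ r n hrs n₁ n₂ n₃ hcond
end
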